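/- arXiv:math/0603167 — 2 statements merged into one kernel-verified Lean document; each statement's English description precedes it below -/
import Mathlib

section
/- Let U ⊆ ℂ^m be a curvature-invariant ℝ-linear subspace, and suppose there exist A ∈ 𝔄₀ and vectors X, Y ∈ V(A) \ {0} such that JX ∈ U, Y ∈ U, and ⟨X,Y⟩ ≠ 0. Then U is a complex linear subspace of ℂ^m, i.e. JU ⊆ U. -/
noncomputable section

open Complex Module

/-- `ℂ^m` with its Hermitian inner product. -/
abbrev Vc (m : ℕ) : Type := EuclideanSpace ℂ (Fin m)

namespace Quadric

variable {m : ℕ}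

/-- The complex structure `J v = i·v`. -/
def J (v : Vc m) : Vc m := (Complex.I : ℂ) • v

/-- `J` as an `ℝ`-linear map. -/
def Jlin (m : ℕ) : Vc m →ₗ[ℝ] Vc m :=
  LinearMap.restrictScalars ℝ ((Complex.I : ℂ) • (LinearMap.id : Vc m →ₗ[ℂ] Vc m))

/-- Componentwise complex conjugation (the standard conjugation `A₀`). -/
def conjA (v : Vc m) : Vc m := WithLp.toLp 2 (fun k => (starRingEnd ℂ) (v k))

/-- The Hermitian inner product, complex-linear in the FIRST argument. -/
def hinner (v w : Vc m) : ℂ := @inner ℂ _ _ w v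

/-- The real inner product `⟨v,w⟩ = Re ⟨v,w⟩_ℂ`. -/
def rinner (v w : Vc m) : ℝ := (hinner v w).re

/-- The curvature tensor of the complex quadric `Q^m`. -/
def Rcurv (u v w : Vc m) : Vc m :=
  hinner w v • u - hinner w u • v - ((2 : ℝ) * rinner (J u) v) • J w
    + hinner v (conjA w) • conjA u - hinner u (conjA w) • conjA v

/-- Curvature invariance: the Lie triple systems of `Q^m`. -/
def CurvInv (U : Submodule ℝ (Vc m)) : Prop :=
  ∀ u ∈ U, ∀ v ∈ U, ∀ w ∈ U, Rcurv u v w ∈ U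

/- ### Auxiliary lemmas -/

lemma hinner_smul_left (a : ℂ) (v w : Vc m) : hinner (a • v) w = a * hinner v w := by
  simp [hinner, inner_smul_right]

lemma hinner_smul_right (a : ℂ) (v w : Vc m) :
    hinner v (a • w) = (starRingEnd ℂ) a * hinner v w := by
  simp [hinner, inner_smul_left, mul_comm]

lemma conjA_smul (a : ℂ) (v : Vc m) : conjA (a • v) = (starRingEnd ℂ) a • conjA v := by
  ext k; simp [conjA]

lemma hinner_conj (v w : Vc m) : (starRingEnd ℂ) (hinner v w) = hinner w v := by
  simp only [hinner]; exact inner_conj_symm (𝕜 := ℂ) v w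

lemma hinner_conjA_conjA (v w : Vc m) :
    hinner (conjA v) (conjA w) = (starRingEnd ℂ) (hinner v w) := by
  simp [hinner, PiLp.inner_apply, conjA, map_sum]

lemma hinner_conjA_symm (v w : Vc m) : hinner v (conjA w) = hinner w (conjA v) := by
  simp [hinner, PiLp.inner_apply, conjA]
  exact Finset.sum_congr rfl fun k _ => mul_comm _ _

lemma rinner_self (v : Vc m) : rinner v v = ‖v‖^2 := by
  simp only [rinner, hinner]
  rw [← inner_self_eq_norm_sq (𝕜 := ℂ)]; rfl

lemma real_smul_eq (r : ℝ) (w : Vc m) : r • w = ((r:ℂ)) • w := by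
  rw [← algebraMap_smul ℂ r w]; norm_num

lemma keyA (lam : ℂ) (hμ : lam * (starRingEnd ℂ) lam = 1) (X Y : Vc m)
    (hcX : conjA X = (starRingEnd ℂ) lam • X) (hcY : conjA Y = (starRingEnd ℂ) lam • Y) :
    Rcurv (J X) Y Y = ((2:ℝ) * rinner X Y) • J Y := by
  set μ := (starRingEnd ℂ) lam with hμdef
  have hconjμ : (starRingEnd ℂ) μ = lam := Complex.conj_conj lam
  have hreal : (starRingEnd ℂ) (hinner X Y) = hinner X Y := by
    rw [← hinner_conjA_conjA, hcX, hcY, hinner_smul_left, hinner_smul_right, hconjμ]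
    linear_combination hinner X Y * hμ
  have hXYre : hinner X Y = ((rinner X Y : ℝ) : ℂ) :=
    ((Complex.conj_eq_iff_re).mp hreal).symm
  have hYX : hinner Y X = ((rinner X Y : ℝ) : ℂ) := by
    rw [← hinner_conj X Y, hreal, hXYre]
  have hr3 : rinner (Complex.I • (Complex.I • X)) Y = -(rinner X Y) := by
    simp only [rinner, smul_smul, Complex.I_mul_I, hinner_smul_left]
    rw [hXYre]; simp
  simp only [Rcurv, J, conjA_smul, hcX, hcY, hr3]
  simp only [hinner_smul_left, hinner_smul_right, Complex.conj_I, hconjμ, hYX, hXYre]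
  rw [real_smul_eq, real_smul_eq]
  set r := rinner X Y
  set nY := hinner Y Y
  match_scalars
  · linear_combination -(nY * Complex.I) * hμ
  · linear_combination -(Complex.I * (r:ℂ)) * hμ

lemma keyB (lam : ℂ) (hμ : lam * (starRingEnd ℂ) lam = 1) (Y w : Vc m)
    (hcY : conjA Y = (starRingEnd ℂ) lam • Y) :
    Rcurv Y (J Y) w = (-((2:ℝ) * rinner Y Y)) • J w := by
  set μ := (starRingEnd ℂ) lam with hμdef
  have hconjμ : (starRingEnd ℂ) μ = lam := Complex.conj_conj lam
  have he : hinner Y (conjA w) = lam * hinner w Y := by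
    rw [hinner_conjA_symm, hcY, hinner_smul_right, hconjμ]
  have hr3 : rinner (Complex.I • Y) (Complex.I • Y) = rinner Y Y := by
    simp only [rinner, hinner_smul_left, hinner_smul_right, Complex.conj_I]
    ring_nf
    simp [Complex.I_sq]
  simp only [Rcurv, J, conjA_smul, hcY, hr3]
  simp only [hinner_smul_left, hinner_smul_right, Complex.conj_I, hconjμ, he]
  rw [real_smul_eq, real_smul_eq]
  set d := hinner w Y
  match_scalars
  · linear_combination 2 * Complex.I * d * hμ
  · ring

/-- If a curvature-invariant subspace `U` of `ℂ^m` contains `JX` and `Y` for some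
nonzero `X, Y ∈ V(A)` (`A ∈ 𝔄₀`) with `⟨X,Y⟩ ≠ 0`, then `U` is a complex subspace. -/
theorem complex_of_contains (hm : 2 ≤ m) (U : Submodule ℝ (Vc m)) (hU : CurvInv U)
    (lam : ℂ) (hlam : ‖lam‖ = 1) (X Y : Vc m)
    (hX : lam • conjA X = X) (hY : lam • conjA Y = Y) (hX0 : X ≠ 0) (hY0 : Y ≠ 0)
    (hJX : J X ∈ U) (hYU : Y ∈ U) (hXY : rinner X Y ≠ 0) :
    ∀ u ∈ U, J u ∈ U := by
  have hμ : lam * (starRingEnd ℂ) lam = 1 := by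
    rw [Complex.mul_conj]
    norm_cast
    rw [Complex.normSq_eq_norm_sq, hlam]; norm_num
  have hμ' : (starRingEnd ℂ) lam * lam = 1 := by rw [mul_comm]; exact hμ
  have hcX : conjA X = (starRingEnd ℂ) lam • X := by
    conv_lhs => rw [← one_smul ℂ (conjA X), ← hμ', mul_smul, hX]
  have hcY : conjA Y = (starRingEnd ℂ) lam • Y := by
    conv_lhs => rw [← one_smul ℂ (conjA Y), ← hμ', mul_smul, hY]
  -- Step 1: J Y ∈ U
  have hJY : J Y ∈ U := by
    have h := hU (J X) hJX Y hYU Y hYU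
    rw [keyA lam hμ X Y hcX hcY] at h
    have hs : (2 : ℝ) * rinner X Y ≠ 0 := by
      simp [hXY]
    have h2 := U.smul_mem ((2 * rinner X Y)⁻¹) h
    rwa [smul_smul, inv_mul_cancel₀ hs, one_smul] at h2
  -- Step 2: for every u ∈ U, J u ∈ U
  intro u hu
  have h := hU Y hYU (J Y) hJY u hu
  rw [keyB lam hμ Y u hcY] at h
  have hs : (-((2:ℝ) * rinner Y Y)) ≠ 0 := by
    rw [rinner_self]
    have h0 : ‖Y‖ ≠ 0 := by simpa using hY0
    have := pow_pos (norm_pos_iff.mpr hY0) 2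
    simp only [neg_ne_zero]
    positivity
  have h2 := U.smul_mem ((-((2:ℝ) * rinner Y Y))⁻¹) h
  rwa [smul_smul, inv_mul_cancel₀ hs, one_smul] at h2

end Quadric
end
end

section
/- Suppose m ≥ 3 and let (x, y, z) be an orthonormal triple of vectors in V(A₀) = ℝ^m ⊆ ℂ^m. Then the 2-dimensional ℝ-linear subspace U = ℝ(2x + Jy) ⊕ ℝ(y + Jx + √3·Jz) of ℂ^m is curvature-invariant: R(u,v)w ∈ U for all u,v,w ∈ U. -/
noncomputable section

open Complex Module

namespace Quadric

variable {m : ℕ}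

/-! ### Auxiliary lemmas -/

lemma rsmul_eq (r : ℝ) (v : Vc m) : r • v = (r : ℂ) • v := by
  rw [← algebraMap_smul ℂ r v]; rfl

lemma hinner_add_left (v v' w : Vc m) : hinner (v + v') w = hinner v w + hinner v' w :=
  inner_add_right _ _ _

lemma hinner_add_right (v w w' : Vc m) : hinner v (w + w') = hinner v w + hinner v w' :=
  inner_add_left _ _ _

lemma hinner_csmul_left (c : ℂ) (v w : Vc m) : hinner (c • v) w = c * hinner v w :=
  inner_smul_right _ _ _

lemma hinner_csmul_right (c : ℂ) (v w : Vc m) :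
    hinner v (c • w) = (starRingEnd ℂ) c * hinner v w := inner_smul_left _ _ _

lemma conjA_add (v w : Vc m) : conjA (v + w) = conjA v + conjA w := by
  ext k; simp [conjA]

lemma conjA_csmul (c : ℂ) (v : Vc m) : conjA (c • v) = (starRingEnd ℂ) c • conjA v := by
  ext k; simp [conjA]

lemma re_cast (c : ℂ) : ((c.re : ℝ) : ℂ) = (c + (starRingEnd ℂ) c) / 2 := by
  rw [Complex.add_conj]; push_cast; ring

lemma rinner_J_left (u v : Vc m) :
    ((rinner (J u) v : ℝ) : ℂ) = (Complex.I * hinner u v - Complex.I * hinner v u) / 2 := by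
  rw [rinner, J, hinner_csmul_left, re_cast, map_mul, Complex.conj_I, hinner_conj]; ring

lemma rinner_J_left' (u v : Vc m) :
    ((rinner ((Complex.I : ℂ) • u) v : ℝ) : ℂ)
      = (Complex.I * hinner u v - Complex.I * hinner v u) / 2 := by
  rw [← J, rinner_J_left]

lemma Rcurv_add₁ (u u' v w : Vc m) :
    Rcurv (u + u') v w = Rcurv u v w + Rcurv u' v w := by
  simp only [Rcurv, rsmul_eq, Complex.ofReal_mul, Complex.ofReal_ofNat, rinner_J_left,
    hinner_add_left, hinner_add_right, conjA_add]
  module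

lemma Rcurv_smul₁ (r : ℝ) (u v w : Vc m) :
    Rcurv (r • u) v w = r • Rcurv u v w := by
  simp only [Rcurv, rsmul_eq, Complex.ofReal_mul, Complex.ofReal_ofNat, rinner_J_left,
    hinner_csmul_left, hinner_csmul_right, conjA_csmul, Complex.conj_ofReal,
    hinner_conj, smul_sub, smul_add, smul_smul]
  module

lemma Rcurv_add₂ (u v v' w : Vc m) :
    Rcurv u (v + v') w = Rcurv u v w + Rcurv u v' w := by
  simp only [Rcurv, rsmul_eq, Complex.ofReal_mul, Complex.ofReal_ofNat, rinner_J_left,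
    hinner_add_left, hinner_add_right, conjA_add]
  module

lemma Rcurv_smul₂ (r : ℝ) (u v w : Vc m) :
    Rcurv u (r • v) w = r • Rcurv u v w := by
  simp only [Rcurv, rsmul_eq, Complex.ofReal_mul, Complex.ofReal_ofNat, rinner_J_left,
    hinner_csmul_left, hinner_csmul_right, conjA_csmul, Complex.conj_ofReal,
    hinner_conj, smul_sub, smul_add, smul_smul]
  module

lemma Rcurv_add₃ (u v w w' : Vc m) :
    Rcurv u v (w + w') = Rcurv u v w + Rcurv u v w' := by
  simp only [Rcurv, rsmul_eq, Complex.ofReal_mul, Complex.ofReal_ofNat, rinner_J_left,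
    hinner_add_left, hinner_add_right, conjA_add, J, smul_add]
  module

lemma Rcurv_smul₃ (r : ℝ) (u v w : Vc m) :
    Rcurv u v (r • w) = r • Rcurv u v w := by
  simp only [Rcurv, rsmul_eq, Complex.ofReal_mul, Complex.ofReal_ofNat, rinner_J_left,
    hinner_csmul_left, hinner_csmul_right, conjA_csmul, Complex.conj_ofReal,
    hinner_conj, smul_sub, smul_add, smul_smul, J]
  module

lemma Rcurv_self (u w : Vc m) : Rcurv u u w = 0 := by
  simp only [Rcurv, rsmul_eq, Complex.ofReal_mul, Complex.ofReal_ofNat, rinner_J_left]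
  module

lemma Rcurv_antisymm (u v w : Vc m) : Rcurv v u w = -Rcurv u v w := by
  simp only [Rcurv, rsmul_eq, Complex.ofReal_mul, Complex.ofReal_ofNat, rinner_J_left]
  module

lemma hinner_real_symm {v w : Vc m} (hv : conjA v = v) (hw : conjA w = w) :
    hinner v w = hinner w v := by
  have hv' : ∀ k, (starRingEnd ℂ) (v k) = v k := fun k => by simpa [conjA] using congrArg (fun u : Vc m => u k) hv
  have hw' : ∀ k, (starRingEnd ℂ) (w k) = w k := fun k => by simpa [conjA] using congrArg (fun u : Vc m => u k) hw
  simp only [hinner, PiLp.inner_apply, RCLike.inner_apply, starRingEnd_apply] at *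
  simp only [hv', hw']
  exact Finset.sum_congr rfl fun k _ => mul_comm _ _

lemma hinner_real {v w : Vc m} (hv : conjA v = v) (hw : conjA w = w) :
    hinner v w = ((rinner v w : ℝ) : ℂ) := by
  have h : (starRingEnd ℂ) (hinner v w) = hinner v w := by
    rw [hinner_conj, hinner_real_symm hv hw]
  exact (Complex.conj_eq_iff_re.mp h).symm

/-- For `m ≥ 3` and an orthonormal triple `(x,y,z)` in `V(A₀) = ℝ^m`, the subspace
`ℝ(2x + Jy) ⊕ ℝ(y + Jx + √3·Jz)` is curvature-invariant. -/
theorem curvInv_of_Atype (hm : 3 ≤ m) (x y z : Vc m)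
    (hx : conjA x = x) (hy : conjA y = y) (hz : conjA z = z)
    (hxn : ‖x‖ = 1) (hyn : ‖y‖ = 1) (hzn : ‖z‖ = 1)
    (hxy : rinner x y = 0) (hxz : rinner x z = 0) (hyz : rinner y z = 0) :
    CurvInv (Submodule.span ℝ {(2 : ℝ) • x + J y, y + J x + Real.sqrt 3 • J z}) := by
  set a : Vc m := (2 : ℝ) • x + J y with ha_def
  set b : Vc m := y + J x + Real.sqrt 3 • J z with hb_def
  -- inner product values
  have Hxx : hinner x x = 1 := by
    rw [hinner, inner_self_eq_norm_sq_to_K, hxn]; norm_num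
  have Hyy : hinner y y = 1 := by
    rw [hinner, inner_self_eq_norm_sq_to_K, hyn]; norm_num
  have Hzz : hinner z z = 1 := by
    rw [hinner, inner_self_eq_norm_sq_to_K, hzn]; norm_num
  have Hxy : hinner x y = 0 := by rw [hinner_real hx hy, hxy]; norm_num
  have Hyx : hinner y x = 0 := by rw [hinner_real_symm hy hx, Hxy]
  have Hxz : hinner x z = 0 := by rw [hinner_real hx hz, hxz]; norm_num
  have Hzx : hinner z x = 0 := by rw [hinner_real_symm hz hx, Hxz]
  have Hyz : hinner y z = 0 := by rw [hinner_real hy hz, hyz]; norm_num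
  have Hzy : hinner z y = 0 := by rw [hinner_real_symm hz hy, Hyz]
  have h3 : ((Real.sqrt 3 : ℝ) : ℂ) * ((Real.sqrt 3 : ℝ) : ℂ) = 3 := by
    rw [← Complex.ofReal_mul, Real.mul_self_sqrt (by norm_num)]
    norm_num
  have h3' : ((Real.sqrt 3 : ℝ) : ℂ) ^ 2 = 3 := by
    rw [sq]; exact h3
  have hsq : (Complex.I) ^ 2 = -1 := Complex.I_sq
  have key1 : Rcurv a b a = (-2 : ℝ) • b := by
    simp only [ha_def, hb_def, Rcurv, rsmul_eq, Complex.ofReal_mul, Complex.ofReal_ofNat,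
      rinner_J_left, rinner_J_left', J, conjA_add, conjA_csmul, hx, hy, hz, Complex.conj_I,
      Complex.conj_ofReal, hinner_add_left, hinner_add_right, hinner_csmul_left,
      hinner_csmul_right, Hxx, Hyy, Hzz, Hxy, Hyx, Hxz, Hzx, Hyz, Hzy, Complex.ofReal_neg, map_ofNat, map_neg, Complex.conj_conj, Complex.conj_I, mul_zero, zero_mul, add_zero, zero_add, mul_one, one_mul, sub_zero]
    match_scalars
    · linear_combination (6 * Complex.I) * hsq
    · linear_combination (2 * (Complex.I ^ 2 - 3)) * hsq
    · linear_combination (2 * Complex.I * ((Real.sqrt 3 : ℝ) : ℂ)) * hsq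
  have key2 : Rcurv a b b = (2 : ℝ) • a := by
    simp only [ha_def, hb_def, Rcurv, rsmul_eq, Complex.ofReal_mul, Complex.ofReal_ofNat,
      rinner_J_left, rinner_J_left', J, conjA_add, conjA_csmul, hx, hy, hz, Complex.conj_I,
      Complex.conj_ofReal, hinner_add_left, hinner_add_right, hinner_csmul_left,
      hinner_csmul_right, Hxx, Hyy, Hzz, Hxy, Hyx, Hxz, Hzx, Hyz, Hzy, Complex.ofReal_neg, map_ofNat, map_neg, Complex.conj_conj, Complex.conj_I, mul_zero, zero_mul, add_zero, zero_add, mul_one, one_mul, sub_zero]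
    match_scalars
    · linear_combination (2 * Complex.I ^ 2) * hsq
    · linear_combination (-2 * Complex.I ^ 3) * h3' + (-6 * Complex.I) * hsq
    · linear_combination (2 * ((Real.sqrt 3 : ℝ) : ℂ) * Complex.I ^ 2) * hsq
  intro u hu v hv w hw
  obtain ⟨p₁, p₂, hp⟩ := Submodule.mem_span_pair.mp hu
  obtain ⟨q₁, q₂, hq⟩ := Submodule.mem_span_pair.mp hv
  obtain ⟨r₁, r₂, hr⟩ := Submodule.mem_span_pair.mp hw
  have key : Rcurv u v w =
      ((p₁ * q₂ - p₂ * q₁) * (2 * r₂)) • a + ((p₁ * q₂ - p₂ * q₁) * (-2 * r₁)) • b := by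
    rw [← hp, ← hq, ← hr]
    simp only [Rcurv_add₁, Rcurv_smul₁, Rcurv_add₂, Rcurv_smul₂, Rcurv_add₃, Rcurv_smul₃,
      Rcurv_self, Rcurv_antisymm a b, key1, key2, smul_zero, smul_neg, smul_smul,
      add_zero, zero_add, smul_add, neg_smul]
    module
  rw [key]
  have haU : a ∈ Submodule.span ℝ {a, b} := Submodule.subset_span (by simp)
  have hbU : b ∈ Submodule.span ℝ {a, b} := Submodule.subset_span (by simp)
  exact Submodule.add_mem _ (Submodule.smul_mem _ _ haU) (Submodule.smul_mem _ _ hbU)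

end Quadric
end
end
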